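/- arXiv:2510.03476 — 5 statements merged into one kernel-verified Lean document; each statement's English description precedes it below -/
import Mathlib

section
/- Let R be a commutative ring and A a cubic R-algebra with a good basis (α, β). Then there exists a unique quadruple (a,b,c,d) ∈ R⁴ such that, in A (with elements of R viewed in A via r ↦ r·1): α² = −ac + bα − aβ, β² = −bd + dα − cβ, and αβ = −ad. -/
/-- Let `R` be a commutative ring and `A` a cubic `R`-algebra (commutative, associative,
unital, free of rank 3 as an `R`-module) with a good basis `(α, β)`, i.e. `(1, α, β)` is
an `R`-basis of `A` (here `α = bA 1`, `β = bA 2`, `bA 0 = 1`) and `α·β ∈ R·1`.  Then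
there is a unique quadruple `(a,b,c,d) ∈ R⁴` such that
`α² = −ac + bα − aβ`, `β² = −bd + dα − cβ`, and `αβ = −ad` in `A`. -/
theorem stmt_5 {R A : Type*} [CommRing R] [CommRing A] [Algebra R A]
    (bA : Module.Basis (Fin 3) R A) (h0 : bA 0 = 1)
    (hgood : ∃ r : R, bA 1 * bA 2 = algebraMap R A r) :
    ∃! q : R × R × R × R,
      bA 1 * bA 1 =
        algebraMap R A (-(q.1 * q.2.2.1)) + q.2.1 • bA 1 - q.1 • bA 2 ∧
      bA 2 * bA 2 =
        algebraMap R A (-(q.2.1 * q.2.2.2)) + q.2.2.2 • bA 1 - q.2.2.1 • bA 2 ∧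
      bA 1 * bA 2 = algebraMap R A (-(q.1 * q.2.2.2)) := by
  obtain ⟨r, hr⟩ := hgood
  set α := bA 1 with hα
  set β := bA 2 with hβ
  have halg : ∀ s : R, algebraMap R A s = s • (1 : A) := fun s =>
    Algebra.algebraMap_eq_smul_one s
  have hrep : ∀ x : A, x = bA.repr x 0 • (1 : A) + bA.repr x 1 • α + bA.repr x 2 • β := by
    intro x
    conv_lhs => rw [← bA.sum_repr x]
    simp [Fin.sum_univ_three, h0, hα, hβ, -Module.Basis.sum_repr]
  have hinj : ∀ s t u s' t' u' : R,
      s • (1 : A) + t • α + u • β = s' • (1 : A) + t' • α + u' • β →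
      s = s' ∧ t = t' ∧ u = u' := by
    intro s t u s' t' u' h
    rw [← h0] at h
    have hj : ∀ j, bA.repr (s • bA 0 + t • α + u • β) j
        = bA.repr (s' • bA 0 + t' • α + u' • β) j := fun j => by rw [h]
    have h0' := hj 0
    have h1' := hj 1
    have h2' := hj 2
    simp [hα, hβ, map_add, map_smul, Finsupp.add_apply, Finsupp.smul_apply,
      Module.Basis.repr_self, Finsupp.single_apply] at h0' h1' h2'
    exact ⟨h0', h1', h2'⟩
  set l := bA.repr (α * α) 0 with hl
  set m := bA.repr (α * α) 1 with hm
  set n := bA.repr (α * α) 2 with hn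
  set l' := bA.repr (β * β) 0 with hl'
  set m' := bA.repr (β * β) 1 with hm'
  set n' := bA.repr (β * β) 2 with hn'
  have hα2 : α * α = l • (1 : A) + m • α + n • β := hrep _
  have hβ2 : β * β = l' • (1 : A) + m' • α + n' • β := hrep _
  have hr' : α * β = r • (1 : A) := by rw [hr, halg]
  -- associativity relations
  have e1 : (α * α) * β = (m * r + n * l') • (1 : A) + (n * m') • α + (l + n * n') • β := by
    rw [hα2, add_mul, add_mul, smul_mul_assoc, smul_mul_assoc, smul_mul_assoc, one_mul,
      hr', hβ2]
    module
  have e2 : (α * α) * β = (0 : R) • (1 : A) + r • α + (0 : R) • β := by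
    rw [mul_assoc, hr', mul_smul_comm, mul_one]
    module
  obtain ⟨k1, k2, k3⟩ := hinj _ _ _ _ _ _ (e1.symm.trans e2)
  have e3 : (β * β) * α = (m' * l + n' * r) • (1 : A) + (l' + m' * m) • α + (m' * n) • β := by
    rw [hβ2, add_mul, add_mul, smul_mul_assoc, smul_mul_assoc, smul_mul_assoc, one_mul,
      hα2, mul_comm β α, hr']
    module
  have e4 : (β * β) * α = (0 : R) • (1 : A) + (0 : R) • α + r • β := by
    rw [mul_assoc, mul_comm β α, hr', mul_smul_comm, mul_one]
    module
  obtain ⟨k4, k5, k6⟩ := hinj _ _ _ _ _ _ (e3.symm.trans e4)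
  -- k2 : n * m' = r, k3 : l + n * n' = 0, k5 : l' + m' * m = 0
  refine ⟨(-n, m, -n', m'), ⟨?_, ?_, ?_⟩, ?_⟩
  · show α * α = algebraMap R A (-(-n * -n')) + m • α - -n • β
    rw [halg, hα2]
    have : -(-n * -n') = l := by linear_combination -k3
    rw [this]
    module
  · show β * β = algebraMap R A (-(m * m')) + m' • α - -n' • β
    rw [halg, hβ2]
    have : -(m * m') = l' := by linear_combination -k5
    rw [this]
    module
  · show α * β = algebraMap R A (-(-n * m'))
    rw [hr]
    congr 1
    linear_combination -k2
  · rintro ⟨a, b, c, d⟩ ⟨hq1, hq2, hq3⟩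
    simp only at hq1 hq2 hq3
    rw [halg] at hq1 hq2
    have hq1' : α * α = (-(a * c)) • (1 : A) + b • α + (-a) • β := by
      rw [hq1]; module
    have hq2' : β * β = (-(b * d)) • (1 : A) + d • α + (-c) • β := by
      rw [hq2]; module
    obtain ⟨_, hb, ha⟩ := hinj _ _ _ _ _ _ (hq1'.symm.trans hα2)
    obtain ⟨_, hd, hc⟩ := hinj _ _ _ _ _ _ (hq2'.symm.trans hβ2)
    have : a = -n := by linear_combination -ha
    have hc' : c = -n' := by linear_combination -hc
    simp [Prod.ext_iff, this, hb, hc', hd]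
end

section
/- Let R be a commutative ring, (a,b,c,d) ∈ R⁴, and let A be the cubic R-algebra with good basis (α,β) satisfying α² = −ac + bα − aβ, β² = −bd + dα − cβ, αβ = −ad. Then the discriminant of A with respect to the basis (1, α, β) — that is, the determinant of the 3×3 matrix with entries Tr_{A/R}(eᵢ·eⱼ), where (e₁,e₂,e₃) = (1,α,β) and Tr_{A/R}(x) denotes the trace of the R-linear map of multiplication by x on A — equals q(a,b,c,d) := b²c² + 18abcd − 4ac³ − 4db³ − 27a²d². -/
/-- Let `R` be a commutative ring, `(a,b,c,d) ∈ R⁴`, and `A` the cubic `R`-algebra with good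
basis `(α,β)` (here `bA 0 = 1`, `α = bA 1`, `β = bA 2`) satisfying `α² = −ac + bα − aβ`,
`β² = −bd + dα − cβ`, `αβ = −ad`.  Then the discriminant of `A` with respect to
`(1, α, β)` — the determinant of the matrix of traces `Tr_{A/R}(eᵢ eⱼ)` — equals
`q(a,b,c,d) = b²c² + 18abcd − 4ac³ − 4db³ − 27a²d²`. -/
theorem stmt_7 {R A : Type*} [CommRing R] [CommRing A] [Algebra R A]
    (a b c d : R) (bA : Module.Basis (Fin 3) R A) (h0 : bA 0 = 1)
    (h1 : bA 1 * bA 1 = algebraMap R A (-(a * c)) + b • bA 1 - a • bA 2)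
    (h2 : bA 2 * bA 2 = algebraMap R A (-(b * d)) + d • bA 1 - c • bA 2)
    (h3 : bA 1 * bA 2 = algebraMap R A (-(a * d))) :
    (Matrix.of fun i j : Fin 3 => Algebra.trace R A (bA i * bA j)).det =
      b ^ 2 * c ^ 2 + 18 * a * b * c * d - 4 * a * c ^ 3 - 4 * d * b ^ 3 -
        27 * a ^ 2 * d ^ 2 := by
  simp only [Algebra.smul_def] at h1 h2
  simp only [map_neg, map_mul] at h1 h2 h3
  have hb0 : ∀ x : A, x * bA 0 = x := fun x => by rw [h0, mul_one]
  have hb0' : ∀ x : A, bA 0 * x = x := fun x => by rw [h0, one_mul]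
  have P1 : bA 1 * bA 1 * bA 1 =
      algebraMap R A a * algebraMap R A a * algebraMap R A d
        - algebraMap R A a * algebraMap R A b * algebraMap R A c
        + (algebraMap R A b * algebraMap R A b - algebraMap R A a * algebraMap R A c) * bA 1
        - algebraMap R A a * algebraMap R A b * bA 2 := by
    linear_combination (bA 1 + algebraMap R A b) * h1 - algebraMap R A a * h3
  have P2 : bA 1 * bA 1 * bA 2 = -(algebraMap R A a * algebraMap R A d) * bA 1 := by
    linear_combination bA 2 * h1 + algebraMap R A b * h3 - algebraMap R A a * h2
  have P3 : bA 2 * bA 2 * bA 1 = -(algebraMap R A a * algebraMap R A d) * bA 2 := by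
    linear_combination bA 1 * h2 + algebraMap R A d * h1 - algebraMap R A c * h3
  have P4 : bA 2 * bA 2 * bA 2 =
      algebraMap R A b * algebraMap R A c * algebraMap R A d
        - algebraMap R A a * algebraMap R A d * algebraMap R A d
        - algebraMap R A c * algebraMap R A d * bA 1
        + (algebraMap R A c * algebraMap R A c - algebraMap R A b * algebraMap R A d) * bA 2 := by
    linear_combination (bA 2 - algebraMap R A c) * h2 + algebraMap R A d * h3
  have key : ∀ x : A, Algebra.trace R A x =
      bA.repr (x * bA 0) 0 + bA.repr (x * bA 1) 1 + bA.repr (x * bA 2) 2 := by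
    intro x
    rw [Algebra.trace_eq_matrix_trace bA, Matrix.trace_fin_three]
    simp [Algebra.leftMulMatrix_eq_repr_mul]
  -- convert products to smul-combination form
  have c11 : bA 1 * bA 1 = (-(a*c)) • bA 0 + b • bA 1 + (-a) • bA 2 := by
    rw [h1]
    simp only [Algebra.smul_def, map_neg, map_mul, h0, mul_one]
    ring
  have c22 : bA 2 * bA 2 = (-(b*d)) • bA 0 + d • bA 1 + (-c) • bA 2 := by
    rw [h2]
    simp only [Algebra.smul_def, map_neg, map_mul, h0, mul_one]
    ring
  have c12 : bA 1 * bA 2 = (-(a*d)) • bA 0 := by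
    rw [h3]
    simp only [Algebra.smul_def, map_neg, map_mul, h0, mul_one]
  have c111 : bA 1 * bA 1 * bA 1 =
      (a*a*d - a*b*c) • bA 0 + (b*b - a*c) • bA 1 + (-(a*b)) • bA 2 := by
    rw [P1]
    simp only [Algebra.smul_def, map_neg, map_mul, map_sub, h0, mul_one]
    ring
  have c112 : bA 1 * bA 1 * bA 2 = (-(a*d)) • bA 1 := by
    rw [P2]
    simp only [Algebra.smul_def, map_neg, map_mul]
  have c221 : bA 2 * bA 2 * bA 1 = (-(a*d)) • bA 2 := by
    rw [P3]
    simp only [Algebra.smul_def, map_neg, map_mul]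
  have c222 : bA 2 * bA 2 * bA 2 =
      (b*c*d - a*d*d) • bA 0 + (-(c*d)) • bA 1 + (c*c - b*d) • bA 2 := by
    rw [P4]
    simp only [Algebra.smul_def, map_neg, map_mul, map_sub, h0, mul_one]
    ring
  -- traces
  have t0 : Algebra.trace R A (bA 0) = 3 := by
    rw [key, hb0, hb0' (bA 1), hb0' (bA 2)]
    simp [Module.Basis.repr_self, Finsupp.single_apply]
    norm_num
  have t1 : Algebra.trace R A (bA 1) = b := by
    rw [key, hb0, c11, c12]
    simp [Module.Basis.repr_self, Finsupp.single_apply]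
  have t2 : Algebra.trace R A (bA 2) = -c := by
    rw [key, hb0, show bA 2 * bA 1 = (-(a*d)) • bA 0 by rw [mul_comm, c12], c22]
    simp [Module.Basis.repr_self, Finsupp.single_apply]
  have t11 : Algebra.trace R A (bA 1 * bA 1) = b*b - 2*(a*c) := by
    rw [key, hb0, c111, c112, c11]
    simp [Module.Basis.repr_self, Finsupp.single_apply]
    ring
  have t12 : Algebra.trace R A (bA 1 * bA 2) = -(3*(a*d)) := by
    rw [key, hb0, c12, smul_mul_assoc, smul_mul_assoc, hb0' (bA 1), hb0' (bA 2)]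
    simp [Module.Basis.repr_self, Finsupp.single_apply]
    ring
  have t22 : Algebra.trace R A (bA 2 * bA 2) = c*c - 2*(b*d) := by
    rw [key, hb0, c221, c222, c22]
    simp [Module.Basis.repr_self, Finsupp.single_apply]
    ring
  rw [Matrix.det_fin_three]
  simp only [Matrix.of_apply]
  rw [show bA 0 * bA 0 = bA 0 from hb0 _,
    show bA 0 * bA 1 = bA 1 from hb0' _,
    show bA 0 * bA 2 = bA 2 from hb0' _,
    show bA 1 * bA 0 = bA 1 from hb0 _,
    show bA 2 * bA 0 = bA 2 from hb0 _,
    show bA 2 * bA 1 = bA 1 * bA 2 by rw [mul_comm],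
    t0, t1, t2, t11, t12, t22]
  ring
end

section
/- Let F be a p-adic field with ring of integers O_F and maximal ideal 𝔪, let E be a cubic étale F-algebra, and let B be the integral closure of O_F in E. Suppose (α, β) is a good basis of B as a cubic O_F-algebra, with associated quadruple (a,b,c,d) ∈ O_F⁴ (so α² = −ac + bα − aβ, β² = −bd + dα − cβ, αβ = −ad). Then not all of a, b, c, d lie in 𝔪. -/
set_option synthInstance.maxHeartbeats 1000000
set_option maxHeartbeats 2000000

theorem aux_local (p : ℕ) [Fact p.Prime]
    {F : Type*} [Field F] [Algebra ℚ_[p] F] [FiniteDimensional ℚ_[p] F]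
    [Algebra ℤ_[p] F] [IsScalarTower ℤ_[p] ℚ_[p] F] :
    IsLocalRing (integralClosure ℤ_[p] F) := by
  classical
  set O := integralClosure ℤ_[p] F with hO
  haveI : NoZeroSMulDivisors ℤ_[p] F := by
    refine (fun hinj => ⟨fun {c x} h => (mul_eq_zero.mp ((Algebra.smul_def c x).symm.trans h)).imp_left fun hc => hinj (hc.trans (map_zero _).symm)⟩ : Function.Injective (algebraMap ℤ_[p] F) → NoZeroSMulDivisors ℤ_[p] F) ?_
    rw [IsScalarTower.algebraMap_eq ℤ_[p] ℚ_[p] F]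
    exact (algebraMap ℚ_[p] F).injective.comp (IsFractionRing.injective ℤ_[p] ℚ_[p])
  haveI : IsDomain O := inferInstance
  haveI : Module.Finite ℤ_[p] O := IsIntegralClosure.finite ℤ_[p] ℚ_[p] F O
  haveI : Module.Free ℤ_[p] O := IsIntegralClosure.module_free ℤ_[p] ℚ_[p] F O
  haveI : Algebra.IsIntegral ℤ_[p] O := inferInstance
  have hp1 : (1:ℝ) < (p:ℝ) := by
    exact_mod_cast (Fact.out : p.Prime).one_lt
  -- p is in every maximal ideal of O
  have hpmem : ∀ (m : Ideal O), m.IsMaximal → algebraMap ℤ_[p] O (p:ℤ_[p]) ∈ m := by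
    intro m hm
    have hc : (m.comap (algebraMap ℤ_[p] O)).IsMaximal :=
      Ideal.isMaximal_comap_of_isIntegral_of_isMaximal m
    have heq : m.comap (algebraMap ℤ_[p] O) = IsLocalRing.maximalIdeal ℤ_[p] :=
      IsLocalRing.eq_maximalIdeal hc
    have hp : (p:ℤ_[p]) ∈ m.comap (algebraMap ℤ_[p] O) := by
      rw [heq, PadicInt.maximalIdeal_eq_span_p]
      exact Ideal.subset_span rfl
    exact hp
  -- basis and coordinate lemma
  let bO := Module.Free.chooseBasis ℤ_[p] O
  have coord : ∀ (z : ℤ_[p]) (y : O), (∃ w, y = z • w) ↔ ∀ i, z ∣ bO.equivFun y i := by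
    intro z y
    constructor
    · rintro ⟨w, rfl⟩ i
      rw [map_smul]
      exact ⟨bO.equivFun w i, rfl⟩
    · intro h
      choose d hd using h
      refine ⟨∑ i, d i • bO i, ?_⟩
      rw [Finset.smul_sum]
      conv_lhs => rw [← bO.sum_equivFun y]
      refine Finset.sum_congr rfl fun i _ => ?_
      rw [hd i, smul_smul, mul_smul]
  have key : ∀ m₁ m₂ : Ideal O, m₁.IsMaximal → m₂.IsMaximal → m₂ ≤ m₁ := by
    intro m₁ m₂ h₁ h₂
    by_contra hle
    obtain ⟨x, hx2, hx1⟩ : ∃ x, x ∈ m₂ ∧ x ∉ m₁ := by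
      obtain ⟨x, hx⟩ := Set.not_subset.mp hle
      exact ⟨x, hx.1, hx.2⟩
    -- pigeonhole: two powers of x agree mod p
    obtain ⟨i₀, j₀, hne, hij⟩ := Finite.exists_ne_map_eq_of_infinite
      (fun n : ℕ => fun i => PadicInt.toZMod (bO.equivFun (x^n) i))
    -- wlog i < j
    obtain ⟨i, j, hlt, hij⟩ : ∃ i j : ℕ, i < j ∧
        (fun i' => PadicInt.toZMod (bO.equivFun (x^i) i')) =
        (fun i' => PadicInt.toZMod (bO.equivFun (x^j) i')) := by
      rcases lt_or_gt_of_ne hne with h | h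
      · exact ⟨i₀, j₀, h, hij⟩
      · exact ⟨j₀, i₀, h, hij.symm⟩
    have hdvdp : ∀ z : ℤ_[p], PadicInt.toZMod z = 0 → (p:ℤ_[p]) ∣ z := by
      intro z hz
      have : z ∈ RingHom.ker (PadicInt.toZMod (p := p)) := hz
      rw [PadicInt.ker_toZMod, PadicInt.maximalIdeal_eq_span_p,
        Ideal.mem_span_singleton] at this
      exact this
    have hsub : ∃ w, x^i - x^j = (p:ℤ_[p]) • w := by
      rw [coord]
      intro i'
      refine hdvdp _ ?_
      rw [map_sub, Pi.sub_apply, map_sub]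
      have := congrFun hij i'
      rw [this, sub_self]
    -- i = 0 is impossible
    rcases Nat.eq_zero_or_pos i with hi0 | hipos
    · obtain ⟨w, hw⟩ := hsub
      rw [hi0, pow_zero] at hw
      have h1m : (1:O) ∈ m₂ := by
        have hxj : x^j ∈ m₂ := Ideal.pow_mem_of_mem m₂ hx2 j (by omega)
        have : (1:O) - x^j ∈ m₂ := by
          rw [hw, Algebra.smul_def]
          exact Ideal.mul_mem_right _ _ (hpmem m₂ h₂)
        simpa using m₂.add_mem this hxj
      exact h₂.ne_top ((Ideal.eq_top_iff_one m₂).mpr h1m)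
    obtain ⟨w₀, hw₀⟩ := hsub
    obtain ⟨k', hk'⟩ : ∃ k', j = i + (k' + 1) := ⟨j - i - 1, by omega⟩
    rw [hk'] at hw₀
    -- congruence propagation
    have step : ∀ a : ℕ, ∃ w, x^(i+a) - x^(i+a+(k'+1)) = (p:ℤ_[p]) • w := by
      intro a
      refine ⟨x^a * w₀, ?_⟩
      rw [show i+a = a+i by ring, show a+i+(k'+1) = a+(i+(k'+1)) by ring,
        pow_add, pow_add, ← mul_sub, hw₀, mul_smul_comm]
    have chain : ∀ t a : ℕ, ∃ w, x^(i+a) - x^(i+a+t*(k'+1)) = (p:ℤ_[p]) • w := by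
      intro t
      induction t with
      | zero => intro a; exact ⟨0, by simp⟩
      | succ t ih =>
        intro a
        obtain ⟨w₁, hw₁⟩ := ih a
        obtain ⟨w₂, hw₂⟩ := step (a + t*(k'+1))
        refine ⟨w₁ + w₂, ?_⟩
        have : x^(i+a) - x^(i+a+(t+1)*(k'+1)) =
            (x^(i+a) - x^(i+a+t*(k'+1))) +
            (x^(i+(a+t*(k'+1))) - x^(i+(a+t*(k'+1))+(k'+1))) := by
          rw [show i+(a+t*(k'+1)) = i+a+t*(k'+1) by ring,
            show i+a+t*(k'+1)+(k'+1) = i+a+(t+1)*(k'+1) by ring]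
          ring
        rw [this, hw₁, hw₂, smul_add]
    -- the approximate idempotent
    set m := i*(k'+1) with hm
    have hmpos : 0 < m := Nat.mul_pos hipos (Nat.succ_pos _)
    have ht0 : ∃ w, (x^m)^2 - x^m = (p:ℤ_[p]) • w := by
      obtain ⟨w, hw⟩ := chain i (i*k')
      refine ⟨-w, ?_⟩
      rw [show i + i*k' = m by rw [hm]; ring, show m + i*(k'+1) = 2*m by rw [hm]; ring] at hw
      rw [← pow_mul, show m*2 = 2*m by ring, ← neg_sub, hw, smul_neg]
    set e₀ := x^m with he₀def
    have he₀1 : e₀ ∉ m₁ := fun h => hx1 (h₁.isPrime.mem_of_pow_mem _ h)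
    have he₀2 : e₀ ∈ m₂ := Ideal.pow_mem_of_mem m₂ hx2 m hmpos
    let seq : ℕ → O := fun n => Nat.rec e₀ (fun _ e => 3*e^2 - 2*e^3) n
    have hseq0 : seq 0 = e₀ := rfl
    have hseqS : ∀ n, seq (n+1) = 3*(seq n)^2 - 2*(seq n)^3 := fun n => rfl
    have hinv : ∀ n, ∃ w, (seq n)^2 - seq n = ((p:ℤ_[p])^(2^n)) • w := by
      intro n
      induction n with
      | zero =>
        obtain ⟨w, hw⟩ := ht0
        exact ⟨w, by rw [hseq0]; simpa using hw⟩
      | succ n ih =>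
        obtain ⟨w, hw⟩ := ih
        refine ⟨(-(3-2*seq n)*(2*seq n+1)) * w^2, ?_⟩
        have alg : (3*(seq n)^2-2*(seq n)^3)^2 - (3*(seq n)^2-2*(seq n)^3) =
            (-(3-2*seq n)*(2*seq n+1)) * ((seq n)^2 - seq n)^2 := by ring
        rw [hseqS, alg, hw, smul_pow, ← pow_mul,
          show 2^n*2 = 2^(n+1) from (pow_succ 2 n).symm, mul_smul_comm]
    have hdiff : ∀ n, ∃ w, seq (n+1) - seq n = ((p:ℤ_[p])^(2^n)) • w := by
      intro n
      obtain ⟨w, hw⟩ := hinv n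
      refine ⟨(-(2*seq n-1)) * w, ?_⟩
      have alg : (3*(seq n)^2-2*(seq n)^3) - seq n =
          (-(2*seq n-1)) * ((seq n)^2 - seq n) := by ring
      rw [hseqS, alg, hw, mul_smul_comm]
    set c : ℕ → (Module.Free.ChooseBasisIndex ℤ_[p] O) → ℤ_[p] :=
      fun n => bO.equivFun (seq n) with hcdef
    have hcb : ∀ n i', ‖c (n+1) i' - c n i'‖ ≤ (p:ℝ)^(-(2^n:ℕ):ℤ) := by
      intro n i'
      obtain ⟨w, hw⟩ := hdiff n
      have hcoord : c (n+1) i' - c n i' = (p:ℤ_[p])^(2^n) * bO.equivFun w i' := by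
        rw [hcdef]
        dsimp only
        rw [← Pi.sub_apply, ← map_sub, hw, map_smul, Pi.smul_apply, smul_eq_mul]
      rw [hcoord]
      calc ‖(p:ℤ_[p])^(2^n) * bO.equivFun w i'‖
          ≤ ‖(p:ℤ_[p])^(2^n)‖ * ‖bO.equivFun w i'‖ := norm_mul_le _ _
        _ ≤ ‖(p:ℤ_[p])^(2^n)‖ * 1 := by
            refine mul_le_mul_of_nonneg_left (PadicInt.norm_le_one _) (norm_nonneg _)
        _ = (p:ℝ)^(-(2^n:ℕ):ℤ) := by rw [mul_one, PadicInt.norm_p_pow]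
    have hple : ∀ a b : ℕ, a ≤ b → (p:ℝ)^(-(b:ℕ):ℤ) ≤ (p:ℝ)^(-(a:ℕ):ℤ) := by
      intro a b hab
      refine zpow_le_zpow_right₀ hp1.le ?_
      omega
    have hcauchy : ∀ i', ∃ Li, Filter.Tendsto (fun n => c n i') Filter.atTop (nhds Li) := by
      intro i'
      refine cauchySeq_tendsto_of_complete ?_
      refine cauchySeq_of_le_geometric ((p:ℝ)⁻¹) 1 ?_ ?_
      · rw [inv_lt_one_iff₀]; right; exact hp1
      · intro n
        rw [dist_eq_norm]
        calc ‖c n i' - c (n+1) i'‖ = ‖c (n+1) i' - c n i'‖ := norm_sub_rev _ _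
          _ ≤ (p:ℝ)^(-(2^n:ℕ):ℤ) := hcb n i'
          _ ≤ (p:ℝ)^(-(n:ℕ):ℤ) := hple n (2^n) (Nat.lt_two_pow_self (n := n)).le
          _ = 1 * ((p:ℝ)⁻¹)^n := by
              rw [one_mul, inv_pow, ← zpow_natCast (p:ℝ), ← zpow_neg]
    choose L hL using hcauchy
    have hstab : ∀ n i', ‖L i' - c n i'‖ ≤ (p:ℝ)^(-((2^n:ℕ)):ℤ) := by
      intro n i'
      have hmono : ∀ m', n ≤ m' → ‖c m' i' - c n i'‖ ≤ (p:ℝ)^(-((2^n:ℕ)):ℤ) := by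
        intro m' hm'
        induction m', hm' using Nat.le_induction with
        | base => simp only [sub_self, norm_zero]; positivity
        | succ m' hm' ih =>
          have h1 : c (m'+1) i' - c n i' = (c (m'+1) i' - c m' i') + (c m' i' - c n i') := by
            ring
          rw [h1]
          refine le_trans (PadicInt.nonarchimedean _ _) (max_le ?_ ih)
          exact le_trans (hcb m' i') (hple (2^n) (2^m') (Nat.pow_le_pow_right (by omega) hm'))
      have htd : Filter.Tendsto (fun m' => ‖c m' i' - c n i'‖) Filter.atTop
          (nhds ‖L i' - c n i'‖) := ((hL i').sub tendsto_const_nhds).norm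
      exact le_of_tendsto htd (Filter.eventually_atTop.mpr ⟨n, hmono⟩)
    set e := bO.equivFun.symm L with hedef
    have hDn : ∀ n, ∃ w, e - seq n = ((p:ℤ_[p])^(2^n)) • w := by
      intro n
      rw [coord]
      intro i'
      have hco : bO.equivFun (e - seq n) i' = L i' - c n i' := by
        rw [map_sub, hedef, LinearEquiv.apply_symm_apply, Pi.sub_apply]
      rw [hco, ← Ideal.mem_span_singleton, ← PadicInt.norm_le_pow_iff_mem_span_pow]
      exact_mod_cast hstab n i'
    have he2 : e^2 - e = 0 := by
      have hco : ∀ n:ℕ, ∃ w, e^2 - e = ((p:ℤ_[p])^(2^n)) • w := by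
        intro n
        obtain ⟨w1, hw1⟩ := hDn n
        obtain ⟨w2, hw2⟩ := hinv n
        refine ⟨w1 * (e + seq n - 1) + w2, ?_⟩
        have hsplit : e^2 - e = (e - seq n) * (e + seq n - 1) + ((seq n)^2 - seq n) := by
          ring
        rw [hsplit, hw1, hw2, smul_mul_assoc, ← smul_add]
      have hz : ∀ i', bO.equivFun (e^2 - e) i' = 0 := by
        intro i'
        have hb : ∀ n:ℕ, ‖bO.equivFun (e^2-e) i'‖ ≤ ((p:ℝ)⁻¹)^n := by
          intro n
          obtain ⟨w, hw⟩ := hco n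
          have : bO.equivFun (e^2-e) i' = (p:ℤ_[p])^(2^n) * bO.equivFun w i' := by
            rw [hw, map_smul, Pi.smul_apply, smul_eq_mul]
          rw [this]
          calc ‖(p:ℤ_[p])^(2^n) * bO.equivFun w i'‖
              ≤ ‖(p:ℤ_[p])^(2^n)‖ * ‖bO.equivFun w i'‖ := norm_mul_le _ _
            _ ≤ ‖(p:ℤ_[p])^(2^n)‖ * 1 :=
                mul_le_mul_of_nonneg_left (PadicInt.norm_le_one _) (norm_nonneg _)
            _ = (p:ℝ)^(-(2^n:ℕ):ℤ) := by rw [mul_one, PadicInt.norm_p_pow]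
            _ ≤ (p:ℝ)^(-(n:ℕ):ℤ) := hple n (2^n) (Nat.lt_two_pow_self (n := n)).le
            _ = ((p:ℝ)⁻¹)^n := by rw [inv_pow, ← zpow_natCast (p:ℝ), ← zpow_neg]
        have h0' : Filter.Tendsto (fun n:ℕ => ((p:ℝ)⁻¹)^n) Filter.atTop (nhds 0) := by
          refine tendsto_pow_atTop_nhds_zero_of_lt_one (by positivity) ?_
          rw [inv_lt_one_iff₀]; right; exact hp1
        have hle0 : ‖bO.equivFun (e^2-e) i'‖ ≤ 0 :=
          ge_of_tendsto h0' (Filter.Eventually.of_forall hb)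
        simpa using le_antisymm hle0 (norm_nonneg _)
      have hfe : bO.equivFun (e^2 - e) = 0 := funext hz
      exact (LinearEquiv.map_eq_zero_iff _).mp hfe
    have hcases : e = 0 ∨ e = 1 := by
      have hmul : e * (e - 1) = 0 := by linear_combination he2
      rcases mul_eq_zero.mp hmul with h | h
      · exact Or.inl h
      · exact Or.inr (by linear_combination h)
    obtain ⟨w0, hw0⟩ : ∃ w0, e - e₀ = (p:ℤ_[p]) • w0 := by
      obtain ⟨w0, hw0⟩ := hDn 0
      exact ⟨w0, by rw [hseq0] at hw0; simpa using hw0⟩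
    rcases hcases with h | h
    · apply he₀1
      have he₀eq : e₀ = (p:ℤ_[p]) • (-w0) := by
        rw [smul_neg, ← hw0, h]; ring
      rw [he₀eq, Algebra.smul_def]
      exact Ideal.mul_mem_right _ _ (hpmem m₁ h₁)
    · have h1m : (1:O) ∈ m₂ := by
        have h1e : (1:O) - e₀ ∈ m₂ := by
          rw [show (1:O) - e₀ = (p:ℤ_[p]) • w0 by rw [← hw0, h], Algebra.smul_def]
          exact Ideal.mul_mem_right _ _ (hpmem m₂ h₂)
        simpa using m₂.add_mem h1e he₀2
      exact h₂.ne_top ((Ideal.eq_top_iff_one m₂).mpr h1m)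
  obtain ⟨m₀, hm₀⟩ := Ideal.exists_maximal O
  exact IsLocalRing.of_unique_max_ideal
    ⟨m₀, hm₀, fun I hI => le_antisymm (key m₀ I hm₀ hI) (key I m₀ hI hm₀)⟩


/-- Let `F` be a p-adic field with ring of integers `O_F = integralClosure ℤ_[p] F` (a local
ring whose maximal ideal is the set of nonunits), let `E` be a cubic étale `F`-algebra,
and let `B` be the integral closure of `O_F` in `E`.  Suppose `(α, β)` is a good basis
of `B` as a cubic `O_F`-algebra (here `bB 0 = 1`, `α = bB 1`, `β = bB 2`) with
associated quadruple `(a,b,c,d) ∈ O_F⁴`, so that `α² = −ac + bα − aβ`,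
`β² = −bd + dα − cβ`, `αβ = −ad`.  Then not all of `a, b, c, d` lie in the maximal
ideal, i.e. it is not the case that all four are nonunits of `O_F`. -/
theorem stmt_8 (p : ℕ) [Fact p.Prime]
    {F : Type*} [Field F] [Algebra ℚ_[p] F] [FiniteDimensional ℚ_[p] F]
    [Algebra ℤ_[p] F] [IsScalarTower ℤ_[p] ℚ_[p] F]
    {E : Type*} [CommRing E] [Algebra F E] [IsReduced E]
    (hdim : Module.finrank F E = 3)
    [Algebra (integralClosure ℤ_[p] F) E] [IsScalarTower (integralClosure ℤ_[p] F) F E]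
    (bB : Module.Basis (Fin 3) (integralClosure ℤ_[p] F)
      (integralClosure (integralClosure ℤ_[p] F) E))
    (h0 : bB 0 = 1)
    (a b c d : integralClosure ℤ_[p] F)
    (h1 : bB 1 * bB 1 =
      algebraMap (integralClosure ℤ_[p] F) (integralClosure (integralClosure ℤ_[p] F) E)
        (-(a * c)) + b • bB 1 - a • bB 2)
    (h2 : bB 2 * bB 2 =
      algebraMap (integralClosure ℤ_[p] F) (integralClosure (integralClosure ℤ_[p] F) E)
        (-(b * d)) + d • bB 1 - c • bB 2)
    (h3 : bB 1 * bB 2 =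
      algebraMap (integralClosure ℤ_[p] F) (integralClosure (integralClosure ℤ_[p] F) E)
        (-(a * d))) :
    ¬(a ∈ nonunits (integralClosure ℤ_[p] F) ∧ b ∈ nonunits (integralClosure ℤ_[p] F) ∧
      c ∈ nonunits (integralClosure ℤ_[p] F) ∧ d ∈ nonunits (integralClosure ℤ_[p] F)) := by
  classical
  rintro ⟨ha, hb, hc, hd⟩
  haveI : NoZeroSMulDivisors ℤ_[p] F := by
    refine (fun hinj => ⟨fun {c x} h => (mul_eq_zero.mp ((Algebra.smul_def c x).symm.trans h)).imp_left fun hc => hinj (hc.trans (map_zero _).symm)⟩ : Function.Injective (algebraMap ℤ_[p] F) → NoZeroSMulDivisors ℤ_[p] F) ?_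
    rw [IsScalarTower.algebraMap_eq ℤ_[p] ℚ_[p] F]
    exact (algebraMap ℚ_[p] F).injective.comp (IsFractionRing.injective ℤ_[p] ℚ_[p])
  haveI : IsDomain ↥(integralClosure ℤ_[p] F) := inferInstance
  haveI : IsDedekindDomain ↥(integralClosure ℤ_[p] F) :=
    integralClosure.isDedekindDomain ℤ_[p] ℚ_[p] F
  haveI hloc : IsLocalRing ↥(integralClosure ℤ_[p] F) := aux_local p
  haveI : Nontrivial E := by
    by_contra h
    rw [not_nontrivial_iff_subsingleton] at h
    rw [Module.finrank_zero_of_subsingleton] at hdim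
    exact (by omega : (0:ℕ) ≠ 3) hdim
  obtain ⟨π, hπ⟩ : (IsLocalRing.maximalIdeal ↥(integralClosure ℤ_[p] F)).IsPrincipal :=
    maximalIdeal_isPrincipal_of_isDedekindDomain ↥(integralClosure ℤ_[p] F)
  have hπnu : ¬ IsUnit π := by
    have hmm : π ∈ IsLocalRing.maximalIdeal ↥(integralClosure ℤ_[p] F) := by
      rw [hπ]; exact Submodule.mem_span_singleton_self π
    exact hmm
  have hmem : ∀ x : ↥(integralClosure ℤ_[p] F), x ∈ nonunits ↥(integralClosure ℤ_[p] F) →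
      ∃ y, y * π = x := by
    intro x hx
    have hx' : x ∈ IsLocalRing.maximalIdeal ↥(integralClosure ℤ_[p] F) := hx
    rw [hπ] at hx'
    obtain ⟨y, hy⟩ := Submodule.mem_span_singleton.mp hx'
    exact ⟨y, by rw [← hy, smul_eq_mul]⟩
  set A1 : E := (bB 1 : E) with hA1def
  set A2 : E := (bB 2 : E) with hA2def
  set φ := algebraMap ↥(integralClosure ℤ_[p] F) E with hφdef
  have hcoe : ∀ x : ↥(integralClosure ℤ_[p] F),
      ((algebraMap ↥(integralClosure ℤ_[p] F)
        ↥(integralClosure (↥(integralClosure ℤ_[p] F)) E) x : _) : E) = φ x := fun x => rfl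
  have hsmulcoe : ∀ (x : ↥(integralClosure ℤ_[p] F))
      (z : ↥(integralClosure (↥(integralClosure ℤ_[p] F)) E)),
      ((x • z : _) : E) = φ x * (z : E) := by
    intro x z
    rw [hφdef, ← Algebra.smul_def]
    rfl
  have h1E : A1 * A1 = φ (-(a*c)) + φ b * A1 - φ a * A2 := by
    have h' := congrArg (Subtype.val) h1
    simpa only [MulMemClass.coe_mul, AddMemClass.coe_add, AddSubgroupClass.coe_sub,
      hcoe, hsmulcoe] using h'
  have h3E : A1 * A2 = φ (-(a*d)) := by
    have h' := congrArg (Subtype.val) h3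
    simpa only [MulMemClass.coe_mul, hcoe] using h'
  by_cases hπ0 : π = 0
  · have hzero : ∀ x : ↥(integralClosure ℤ_[p] F),
        x ∈ nonunits ↥(integralClosure ℤ_[p] F) → x = 0 := by
      intro x hx
      obtain ⟨y, hy⟩ := hmem x hx
      rw [← hy, hπ0, mul_zero]
    have hA1sq : A1 * A1 = 0 := by
      rw [h1E, hzero a ha, hzero b hb]
      simp
    have hA10 : A1 = 0 := by
      have hnil : IsNilpotent A1 := ⟨2, by rw [pow_two, hA1sq]⟩
      exact hnil.eq_zero
    rw [hA1def] at hA10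
    exact bB.ne_zero 1 (by exact_mod_cast hA10)
  obtain ⟨a', ha'⟩ := hmem a ha
  obtain ⟨b', hb'⟩ := hmem b hb
  obtain ⟨c', hc'⟩ := hmem c hc
  obtain ⟨d', hd'⟩ := hmem d hd
  -- p lies in the maximal ideal of O
  haveI : Algebra.IsIntegral ℤ_[p] ↥(integralClosure ℤ_[p] F) := inferInstance
  have hpm : algebraMap ℤ_[p] ↥(integralClosure ℤ_[p] F) (p:ℤ_[p]) ∈
      IsLocalRing.maximalIdeal ↥(integralClosure ℤ_[p] F) := by
    have hcm : ((IsLocalRing.maximalIdeal ↥(integralClosure ℤ_[p] F)).comap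
        (algebraMap ℤ_[p] ↥(integralClosure ℤ_[p] F))).IsMaximal :=
      Ideal.isMaximal_comap_of_isIntegral_of_isMaximal _
    have heq := IsLocalRing.eq_maximalIdeal hcm
    have hpc : (p:ℤ_[p]) ∈ (IsLocalRing.maximalIdeal ↥(integralClosure ℤ_[p] F)).comap
        (algebraMap ℤ_[p] ↥(integralClosure ℤ_[p] F)) := by
      rw [heq, PadicInt.maximalIdeal_eq_span_p]
      exact Ideal.subset_span rfl
    exact hpc
  -- the image of π in E is a unit
  have hunit : IsUnit (φ π) := by
    by_contra hnu
    obtain ⟨M, hM, hmemM⟩ := exists_max_ideal_of_mem_nonunits (mem_nonunits_iff.mpr hnu)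
    haveI : M.IsMaximal := hM
    letI : Field (E ⧸ M) := Ideal.Quotient.field M
    obtain ⟨z, hz⟩ := hmem (algebraMap ℤ_[p] ↥(integralClosure ℤ_[p] F) (p:ℤ_[p])) hpm
    have hψπ : Ideal.Quotient.mk M (φ π) = 0 := Ideal.Quotient.eq_zero_iff_mem.mpr hmemM
    have hp0 : ((p:ℕ) : E ⧸ M) = 0 := by
      have e1 : algebraMap ℤ_[p] ↥(integralClosure ℤ_[p] F) (p:ℤ_[p]) =
          ((p:ℕ) : ↥(integralClosure ℤ_[p] F)) := by
        rw [show ((p:ℤ_[p])) = ((p:ℕ):ℤ_[p]) by norm_cast, map_natCast]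
      calc ((p:ℕ) : E ⧸ M) = Ideal.Quotient.mk M (φ ((p:ℕ) : ↥(integralClosure ℤ_[p] F))) := by
            rw [map_natCast φ, map_natCast (Ideal.Quotient.mk M)]
        _ = Ideal.Quotient.mk M (φ z) * Ideal.Quotient.mk M (φ π) := by
            rw [← e1, ← hz, map_mul, map_mul]
        _ = 0 := by rw [hψπ, mul_zero]
    have hp1 : ((p:ℕ) : E ⧸ M) ≠ 0 := by
      have e2 : ((p:ℕ) : E ⧸ M) =
          ((Ideal.Quotient.mk M).comp (algebraMap F E)) ((p:ℕ) : F) := by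
        rw [map_natCast]
      rw [e2]
      have hinj : Function.Injective ((Ideal.Quotient.mk M).comp (algebraMap F E)) :=
        ((Ideal.Quotient.mk M).comp (algebraMap F E)).injective
      intro h0
      have hF0 : ((p:ℕ) : F) = 0 := by
        apply hinj
        rw [h0, map_zero]
      have hpF : ((p:ℕ) : F) ≠ 0 := by
        have e3 : ((p:ℕ) : F) = algebraMap ℚ_[p] F ((p:ℕ) : ℚ_[p]) := by rw [map_natCast]
        rw [e3]
        have : ((p:ℕ) : ℚ_[p]) ≠ 0 :=
          Nat.cast_ne_zero.mpr (Fact.out : p.Prime).ne_zero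
        exact fun h => this ((map_eq_zero_iff _ (algebraMap ℚ_[p] F).injective).mp h)
      exact hpF hF0
    exact hp1 hp0
  set πE : E := φ π with hπEdef
  obtain ⟨u, hu'⟩ := isUnit_iff_exists_inv.mp hunit
  have hu : u * πE = 1 := by rw [mul_comm] at hu'; exact hu'
  have hfa : φ a = φ a' * πE := by rw [← ha', map_mul]
  have hfb : φ b = φ b' * πE := by rw [← hb', map_mul]
  have hfc : φ c = φ c' * πE := by rw [← hc', map_mul]
  have hfd : φ d = φ d' * πE := by rw [← hd', map_mul]
  set γ : E := u * A1 with hγdef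
  have hA : πE * γ = A1 := by
    rw [hγdef, ← mul_assoc, mul_comm πE u, hu, one_mul]
  have bracket : A1^3 - φ b * A1^2 + φ a * φ c * A1 - φ a * (φ a * φ d) = 0 := by
    have h1E' : A1 * A1 = -(φ a * φ c) + φ b * A1 - φ a * A2 := by
      rw [h1E, map_neg, map_mul]
    have h3E' : A1 * A2 = -(φ a * φ d) := by
      rw [h3E, map_neg, map_mul]
    linear_combination A1 * h1E' - φ a * h3E'
  have key2 : πE^3 * (γ^3 - φ b' * γ^2 + φ a' * φ c' * γ - φ a' * (φ a' * φ d')) = 0 := by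
    have bracket' : A1^3 - (φ b' * πE) * A1^2 + (φ a' * πE) * ((φ c' * πE) * A1)
        - (φ a' * πE) * ((φ a' * πE) * (φ d' * πE)) = 0 := by
      rw [← hfa, ← hfb, ← hfc, ← hfd]
      linear_combination bracket
    linear_combination bracket' +
      ((πE*γ)^2 + (πE*γ)*A1 + A1^2 - πE*(φ b')*((πE*γ) + A1) + πE^2*(φ a')*(φ c')) * hA
  have keyγ : γ^3 - φ b' * γ^2 + φ a' * φ c' * γ - φ a' * (φ a' * φ d') = 0 := by
    have h' := congrArg (fun z => u^3 * z) key2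
    simp only [mul_zero] at h'
    calc γ^3 - φ b' * γ^2 + φ a' * φ c' * γ - φ a' * (φ a' * φ d')
        = (u*πE)^3 * (γ^3 - φ b' * γ^2 + φ a' * φ c' * γ - φ a' * (φ a' * φ d')) := by
          rw [hu]; ring
      _ = u^3 * (πE^3 * (γ^3 - φ b' * γ^2 + φ a' * φ c' * γ - φ a' * (φ a' * φ d'))) := by
          ring
      _ = 0 := h'
  have hγB : γ ∈ integralClosure (↥(integralClosure ℤ_[p] F)) E := by
    rw [mem_integralClosure_iff]
    refine ⟨Polynomial.X^3 - Polynomial.C b' * Polynomial.X^2 +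
      Polynomial.C (a'*c') * Polynomial.X - Polynomial.C (a'*(a'*d')), ?_, ?_⟩
    · monicity!
    · have hev : (Polynomial.aeval γ) (Polynomial.X^3 - Polynomial.C b' * Polynomial.X^2 +
          Polynomial.C (a'*c') * Polynomial.X - Polynomial.C (a'*(a'*d'))) = 0 := by
        simp only [map_sub, map_add, map_mul, map_pow, Polynomial.aeval_X, Polynomial.aeval_C]
        rw [← hφdef]
        linear_combination keyγ
      rwa [Polynomial.aeval_def] at hev
  have hπg : bB 1 = π • (⟨γ, hγB⟩ : ↥(integralClosure (↥(integralClosure ℤ_[p] F)) E)) := by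
    apply Subtype.ext
    rw [hsmulcoe]
    exact hA.symm
  have hone : (1 : ↥(integralClosure ℤ_[p] F)) =
      π * (bB.repr (⟨γ, hγB⟩ : ↥(integralClosure (↥(integralClosure ℤ_[p] F)) E)) 1) := by
    have h' := congrArg (fun z => bB.repr z 1) hπg
    simpa only [Module.Basis.repr_self, Finsupp.single_eq_same, map_smul, Finsupp.smul_apply,
      smul_eq_mul] using h'
  exact hπnu (IsUnit.of_mul_eq_one _ hone.symm)
end

section
/- Let F be a field of characteristic 0, K a quadratic field extension of F with nontrivial F-automorphism k ↦ k̄ (extended entrywise to M₃(K)), and U₃(F) := {g ∈ GL₃(K) : g · ᵗḡ = 1}. Let E be a cubic étale F-algebra, L := E ⊗_F K with involution l ↦ l̄ induced by id_E ⊗ (conjugation of K/F), and L¹ := {l ∈ L^× : l̄ · l = 1}. Let i : L → M₃(K) be an injective K-algebra homomorphism satisfying i(l̄) = ᵗ( \overline{i(l)} ) for all l ∈ L. Then {g ∈ U₃(F) : g · i(x) = i(x) · g for all x ∈ E} = i(L¹). -/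
open Matrix
open scoped TensorProduct

section Aux

variable {k : Type*} [Field k] {R : Type*} [CommRing R] [Algebra k R]

theorem aux_exists_idem [FiniteDimensional k R] [IsReduced R] {x : R} (hx : x ≠ 0) :
    ∃ y : R, (x * y) * (x * y) = x * y ∧ x * y ≠ 0 := by
  classical
  haveI : IsArtinianRing R := isArtinian_of_tower k inferInstance
  let e := IsArtinianRing.equivPi R
  have hex : e x ≠ 0 := fun h => hx (by simpa using e.injective (by simpa using h))
  obtain ⟨I, hI⟩ := Function.ne_iff.mp hex
  simp only [Pi.zero_apply] at hI
  haveI : (I : Ideal R).IsMaximal := I.2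
  letI : Field (R ⧸ (I : Ideal R)) := Ideal.Quotient.field I.1
  have hkey : e (x * e.symm (Pi.single I (e x I)⁻¹)) = Pi.single I 1 := by
    rw [_root_.map_mul, e.apply_symm_apply]
    funext J
    rcases eq_or_ne J I with rfl | hJ
    · simp only [Pi.mul_apply, Pi.single_eq_same]
      exact mul_inv_cancel₀ hI
    · simp [Pi.single_eq_of_ne hJ]
  refine ⟨e.symm (Pi.single I (e x I)⁻¹), ?_, ?_⟩
  · apply e.injective
    rw [_root_.map_mul, hkey]
    funext J
    rcases eq_or_ne J I with rfl | hJ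
    · simp
    · simp [Pi.single_eq_of_ne hJ]
  · intro h
    rw [h, _root_.map_zero] at hkey
    have := congrFun hkey.symm I
    simp at this

theorem aux_traceForm_nondeg [CharZero k] [FiniteDimensional k R] [IsReduced R] :
    (Algebra.traceForm k R).Nondegenerate := by
  suffices h : (Algebra.traceForm k R).SeparatingLeft from
    ⟨h, fun y hy => h y fun x => by simpa [Algebra.traceForm_apply, mul_comm] using hy x⟩
  intro x hx
  by_contra hx0
  obtain ⟨y, hidem, hne⟩ := aux_exists_idem (k := k) hx0
  have h0 : Algebra.trace k R (x * y) = 0 := by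
    simpa [Algebra.traceForm_apply] using hx y
  set ε := x * y with hε
  let f : Module.End k R := Algebra.lmul k R ε
  have hfapp : ∀ u : R, f u = ε * u := fun u => rfl
  have hproj : LinearMap.IsProj (LinearMap.range f) f := by
    constructor
    · intro u; exact ⟨u, rfl⟩
    · rintro _ ⟨u, rfl⟩
      rw [hfapp, hfapp, ← mul_assoc, hidem]
  have htr : LinearMap.trace k R f = (Module.finrank k (LinearMap.range f) : k) :=
    hproj.trace
  have htr0 : Algebra.trace k R ε = LinearMap.trace k R f := by
    rw [Algebra.trace_apply]
  have hrangene : LinearMap.range f ≠ ⊥ := by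
    intro hbot
    have hmem : ε ∈ LinearMap.range f := ⟨1, mul_one ε⟩
    rw [hbot] at hmem
    exact hne (by simpa using hmem)
  have hcast : (Module.finrank k (LinearMap.range f) : k) ≠ 0 := by
    rw [Nat.cast_ne_zero]
    intro h
    exact hrangene (Submodule.finrank_eq_zero.mp h)
  rw [h0] at htr0
  rw [← htr0] at htr
  exact hcast htr.symm

end Aux

section Centralizer

theorem aux_centralizer {k : Type*} [Field k] {R : Type*} [CommRing R] [Algebra k R]
    [FiniteDimensional k R] [IsReduced R] {V : Type*} [AddCommGroup V] [Module k V]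
    [FiniteDimensional k V] (φ : R →ₐ[k] Module.End k V) (hφ : Function.Injective φ)
    (hrank : Module.finrank k V = Module.finrank k R)
    (g : Module.End k V) (hg : ∀ r, g * φ r = φ r * g) : ∃ r, g = φ r := by
  classical
  haveI : IsArtinianRing R := isArtinian_of_tower k inferInstance
  let e := IsArtinianRing.equivPi R
  haveI : Finite (MaximalSpectrum R) := inferInstance
  haveI : Fintype (MaximalSpectrum R) := Fintype.ofFinite _
  let ε : MaximalSpectrum R → R := fun I => e.symm (Pi.single I 1)
  have hεe : ∀ I, e (ε I) = Pi.single I 1 := fun I => e.apply_symm_apply _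
  have hidem : ∀ I, ε I * ε I = ε I := by
    intro I
    apply e.injective
    rw [_root_.map_mul, hεe]
    funext J
    rcases eq_or_ne J I with rfl | hJ
    · simp
    · simp [Pi.single_eq_of_ne hJ]
  have horth : ∀ I J, J ≠ I → ε I * ε J = 0 := by
    intro I J hJ
    apply e.injective
    rw [_root_.map_mul, hεe, hεe, _root_.map_zero]
    funext T
    rcases eq_or_ne T I with rfl | hT
    · simp [Pi.single_eq_of_ne hJ, Pi.single_eq_of_ne hJ.symm]
    · simp [Pi.single_eq_of_ne hT]
  have hεne : ∀ I, ε I ≠ 0 := by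
    intro I h
    have h2 : e (ε I) = 0 := by rw [h, _root_.map_zero]
    rw [hεe] at h2
    have h3 := congrFun h2 I
    haveI : (I : Ideal R).IsMaximal := I.2
    haveI : Nontrivial (R ⧸ (I : Ideal R)) := Ideal.Quotient.nontrivial_iff.mpr I.2.ne_top
    simp at h3
  have hne : ∀ I, ∃ w : V, φ (ε I) w ≠ 0 := by
    intro I
    by_contra h
    push_neg at h
    exact hεne I (hφ (by rw [_root_.map_zero]; exact LinearMap.ext h))
  choose w hw using hne
  let v : V := ∑ I, φ (ε I) (w I)
  have expand : ∀ a : R, φ a v = ∑ J, φ (a * ε J) (w J) := by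
    intro a
    rw [show v = ∑ J, φ (ε J) (w J) from rfl, _root_.map_sum]
    refine Finset.sum_congr rfl fun J _ => ?_
    rw [_root_.map_mul, Module.End.mul_apply]
  have hmulε : ∀ (r : R) I, φ (r * ε I) v = φ (r * ε I) (w I) := by
    intro r I
    rw [expand, Finset.sum_eq_single I]
    · rw [mul_assoc, hidem]
    · intro J _ hJ
      rw [mul_assoc, horth I J hJ, mul_zero, _root_.map_zero, LinearMap.zero_apply]
    · exact fun h => absurd (Finset.mem_univ I) h
  have hann : ∀ r : R, φ r v = 0 → r = 0 := by
    intro r hr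
    apply e.injective
    rw [_root_.map_zero]
    funext I
    by_contra hrI
    haveI : (I : Ideal R).IsMaximal := I.2
    letI : Field (R ⧸ (I : Ideal R)) := Ideal.Quotient.field I.1
    simp only [Pi.zero_apply] at hrI
    have h1 : e.symm (Pi.single I (e r I)⁻¹) * (r * ε I) = ε I := by
      apply e.injective
      rw [_root_.map_mul, _root_.map_mul, e.apply_symm_apply, hεe]
      funext J
      rcases eq_or_ne J I with rfl | hJ
      · simp only [Pi.mul_apply, Pi.single_eq_same, mul_one]
        exact inv_mul_cancel₀ hrI
      · simp [Pi.single_eq_of_ne hJ]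
    have h2 : φ (r * ε I) (w I) = 0 := by
      rw [← hmulε r I, mul_comm r (ε I), _root_.map_mul, Module.End.mul_apply, hr,
        _root_.map_zero]
    have h3 : φ (ε I) (w I) = 0 := by
      rw [← h1, _root_.map_mul, Module.End.mul_apply, h2, _root_.map_zero]
    exact hw I h3
  let ψ : R →ₗ[k] V :=
    { toFun := fun r => φ r v
      map_add' := fun a b => by
        show φ (a + b) v = φ a v + φ b v
        rw [_root_.map_add]; rfl
      map_smul' := fun c a => by
        show φ (c • a) v = c • (φ a v)
        rw [_root_.map_smul]; rfl }
  have hψinj : Function.Injective ψ := by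
    rw [injective_iff_map_eq_zero]
    intro r hr
    exact hann r hr
  have hψsurj : Function.Surjective ψ :=
    (LinearMap.injective_iff_surjective_of_finrank_eq_finrank hrank.symm).mp hψinj
  obtain ⟨r₀, hr₀⟩ := hψsurj (g v)
  refine ⟨r₀, LinearMap.ext fun u => ?_⟩
  obtain ⟨r, rfl⟩ := hψsurj u
  show g (φ r v) = φ r₀ (φ r v)
  have hc : g (φ r v) = φ r (g v) := by
    have := congrFun (congrArg DFunLike.coe (hg r)) v
    simpa using this
  rw [hc, ← hr₀]
  show φ r (φ r₀ v) = φ r₀ (φ r v)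
  rw [← Module.End.mul_apply, ← Module.End.mul_apply, ← _root_.map_mul, ← _root_.map_mul,
    mul_comm]

end Centralizer

section Reduced

theorem aux_isReduced_baseChange {F K : Type*} [Field F] [CharZero F] [Field K] [Algebra F K]
    {E : Type*} [CommRing E] [Algebra F E] [IsReduced E] [FiniteDimensional F E] :
    IsReduced (TensorProduct F K E) := by
  classical
  constructor
  intro l hl
  have key : ∀ x : E, Algebra.trace K (TensorProduct F K E) ((1 : K) ⊗ₜ[F] x)
      = algebraMap F K (Algebra.trace F E x) := by
    intro x
    rw [Algebra.trace_apply, Algebra.trace_apply, ← LinearMap.trace_baseChange]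
    congr 1
    apply LinearMap.ext
    intro z
    induction z using TensorProduct.induction_on with
    | zero => simp
    | tmul c y =>
        show ((1 : K) ⊗ₜ[F] x) * (c ⊗ₜ[F] y) = LinearMap.baseChange K (Algebra.lmul F E x) _
        rw [Algebra.TensorProduct.tmul_mul_tmul, one_mul, LinearMap.baseChange_tmul]
        rfl
    | add a b ha hb => rw [_root_.map_add, _root_.map_add, ha, hb]
  set b := Module.finBasis F E with hb
  have hmat : LinearMap.BilinForm.toMatrix (b.baseChange K) (Algebra.traceForm K (TensorProduct F K E))
      = (algebraMap F K).mapMatrix (LinearMap.BilinForm.toMatrix b (Algebra.traceForm F E)) := by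
    funext i j
    rw [BilinForm.toMatrix_apply, RingHom.mapMatrix_apply]
    show _ = algebraMap F K (LinearMap.BilinForm.toMatrix b (Algebra.traceForm F E) i j)
    rw [BilinForm.toMatrix_apply, Algebra.traceForm_apply, Algebra.traceForm_apply,
      Module.Basis.baseChange_apply, Module.Basis.baseChange_apply,
      Algebra.TensorProduct.tmul_mul_tmul, one_mul, key]
  have hnd : (Algebra.traceForm K (TensorProduct F K E)).Nondegenerate := by
    rw [LinearMap.BilinForm.nondegenerate_iff_det_ne_zero (b.baseChange K), hmat,
      ← RingHom.map_det]
    have hE : (LinearMap.BilinForm.toMatrix b (Algebra.traceForm F E)).det ≠ 0 :=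
      (LinearMap.BilinForm.nondegenerate_iff_det_ne_zero b).mp (aux_traceForm_nondeg (k := F))
    intro h
    exact hE (RingHom.injective (algebraMap F K) (by rw [h, _root_.map_zero]))
  apply hnd.1 l
  intro l'
  rw [Algebra.traceForm_apply, Algebra.trace_apply]
  have hnil : IsNilpotent (l * l') := Commute.isNilpotent_mul_right (Commute.all _ _) hl
  have hnill : IsNilpotent (Algebra.lmul K (TensorProduct F K E) (l * l')) :=
    hnil.map (Algebra.lmul K (TensorProduct F K E))
  exact (LinearMap.isNilpotent_trace_of_isNilpotent hnill).eq_zero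

end Reduced


/-- Let `F` be a field of characteristic 0, `K` a quadratic field extension of `F` with
nontrivial `F`-automorphism `σ` (extended entrywise to `M₃(K)`), and
`U₃(F) = {g ∈ GL₃(K) : g·ᵗḡ = 1}`.  Let `E` be a cubic étale `F`-algebra,
`L := K ⊗_F E` with involution `l ↦ l̄` induced by `σ ⊗ id_E`, and
`L¹ = {l ∈ L^× : l̄·l = 1}`.  Let `i : L → M₃(K)` be an injective `K`-algebra
homomorphism with `i(l̄) = ᵗ(\overline{i(l)})` for all `l`.  Then the set of `g ∈ U₃(F)`
commuting with `i(x)` for all `x ∈ E` (embedded via `x ↦ 1 ⊗ x`) equals `i(L¹)`. -/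
theorem stmt_11 {F K : Type*} [Field F] [CharZero F] [Field K] [Algebra F K]
    (hquad : Module.finrank F K = 2)
    (σ : K ≃ₐ[F] K) (hσ : σ ≠ AlgEquiv.refl)
    {E : Type*} [CommRing E] [Algebra F E] [IsReduced E]
    (hdim : Module.finrank F E = 3)
    (i : TensorProduct F K E →ₐ[K] Matrix (Fin 3) (Fin 3) K)
    (hinj : Function.Injective i)
    (hherm : ∀ l : TensorProduct F K E,
      i (Algebra.TensorProduct.map σ.toAlgHom (AlgHom.id F E) l) = ((i l).map σ)ᵀ) :
    {g : Matrix (Fin 3) (Fin 3) K | g * ((g.map σ)ᵀ) = 1 ∧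
        ∀ x : E, g * i ((1 : K) ⊗ₜ[F] x) = i ((1 : K) ⊗ₜ[F] x) * g} =
      ⇑i '' {l : TensorProduct F K E | IsUnit l ∧
        Algebra.TensorProduct.map σ.toAlgHom (AlgHom.id F E) l * l = 1} := by
  classical
  haveI hFD : FiniteDimensional F E := Module.finite_of_finrank_eq_succ (n := 2) hdim
  haveI : IsReduced (TensorProduct F K E) := aux_isReduced_baseChange
  haveI : FiniteDimensional K (TensorProduct F K E) :=
    Module.Finite.of_basis ((Module.finBasis F E).baseChange K)
  have hrkL : Module.finrank K (TensorProduct F K E) = 3 := by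
    rw [Module.finrank_baseChange, hdim]
  ext g
  simp only [Set.mem_setOf_eq, Set.mem_image]
  constructor
  · rintro ⟨hu, hc⟩
    have hcomm : ∀ l, g * i l = i l * g := by
      intro l
      induction l using TensorProduct.induction_on with
      | zero => simp
      | tmul c x =>
          have hx : (c ⊗ₜ[F] x : TensorProduct F K E) = c • ((1 : K) ⊗ₜ[F] x) := by
            rw [TensorProduct.smul_tmul', smul_eq_mul, mul_one]
          rw [hx, _root_.map_smul, Matrix.mul_smul, Matrix.smul_mul, hc x]
      | add a b ha hb => rw [_root_.map_add, mul_add, add_mul, ha, hb]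
    obtain ⟨l, hl⟩ := aux_centralizer ((Matrix.toLinAlgEquiv' (n := Fin 3)).toAlgHom.comp i)
      ((Matrix.toLinAlgEquiv' (n := Fin 3)).injective.comp hinj)
      (by rw [hrkL, Module.finrank_fin_fun])
      (Matrix.toLinAlgEquiv' g)
      (fun r => by
        show Matrix.toLinAlgEquiv' g * Matrix.toLinAlgEquiv' (i r)
            = Matrix.toLinAlgEquiv' (i r) * Matrix.toLinAlgEquiv' g
        rw [← _root_.map_mul, ← _root_.map_mul, hcomm r])
    have hgl : g = i l := (Matrix.toLinAlgEquiv' (n := Fin 3)).injective hl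
    have h1 : i (l * Algebra.TensorProduct.map σ.toAlgHom (AlgHom.id F E) l) = 1 := by
      rw [_root_.map_mul, hherm l, ← hgl]
      exact hu
    have h2 : l * Algebra.TensorProduct.map σ.toAlgHom (AlgHom.id F E) l = 1 :=
      hinj (by rw [h1, _root_.map_one])
    refine ⟨l, ⟨IsUnit.of_mul_eq_one _ h2, ?_⟩, hgl.symm⟩
    rw [mul_comm]
    exact h2
  · rintro ⟨l, ⟨hul, hl1⟩, rfl⟩
    refine ⟨?_, ?_⟩
    · rw [← hherm l, ← _root_.map_mul, mul_comm l, hl1, _root_.map_one]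
    · intro x
      rw [← _root_.map_mul, ← _root_.map_mul, mul_comm]
end

section
/- Let F be a field of characteristic 0, K a quadratic étale F-algebra (a 2-dimensional reduced commutative F-algebra) with nontrivial F-algebra involution k ↦ k̄, extended entrywise to M₃(K), and let J := {x ∈ M₃(K) : ᵗx̄ = x} with Jordan product x∘y := (xy+yx)/2. Let E be a cubic étale F-algebra and let i : E → J be an injective F-linear map with i(1) = 1₃ and i(zz') = i(z)∘i(z') for all z, z' ∈ E. Then the matrices in i(E) pairwise commute in M₃(K), and i(zz') = i(z)·i(z') (the associative matrix product) for all z, z' ∈ E. -/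
open Matrix

open Polynomial

/-- Minimal polynomials in a reduced finite algebra over a field are squarefree. -/
private lemma sqfree_minpoly_aux {F E : Type*} [Field F] [CommRing E] [IsReduced E]
    [Algebra F E] [Module.Finite F E] (z : E) : Squarefree (minpoly F z) := by
  have hz : IsIntegral F z := IsIntegral.of_finite F z
  have hp0 : minpoly F z ≠ 0 := minpoly.ne_zero hz
  intro q hq
  obtain ⟨r, hr⟩ := hq
  have hq0 : q ≠ 0 := by rintro rfl; rw [zero_mul, zero_mul] at hr; exact absurd hr hp0
  have hr0 : r ≠ 0 := by rintro rfl; rw [mul_zero] at hr; exact absurd hr hp0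
  have haz : (Polynomial.aeval z) (q * r) = 0 := by
    have hsq : (Polynomial.aeval z) (q * r) * (Polynomial.aeval z) (q * r) = 0 := by
      rw [← _root_.map_mul]
      have : q * r * (q * r) = minpoly F z * r := by rw [hr]; ring
      rw [this, _root_.map_mul, minpoly.aeval, zero_mul]
    have : IsNilpotent ((Polynomial.aeval z) (q * r)) := ⟨2, by rw [pow_two]; exact hsq⟩
    exact this.eq_zero
  have hdvd : minpoly F z ∣ q * r := minpoly.dvd F z haz
  have hqr0 : q * r ≠ 0 := mul_ne_zero hq0 hr0
  have hdeg := Polynomial.natDegree_le_of_dvd hdvd hqr0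
  rw [hr, Polynomial.natDegree_mul (mul_ne_zero hq0 hq0) hr0,
    Polynomial.natDegree_mul hq0 hq0, Polynomial.natDegree_mul hq0 hr0] at hdeg
  have hqdeg : q.natDegree = 0 := by omega
  rw [Polynomial.eq_C_of_natDegree_eq_zero hqdeg]
  exact Polynomial.isUnit_C.mpr (IsUnit.mk0 _ (by
    intro h; apply hq0; rw [Polynomial.eq_C_of_natDegree_eq_zero hqdeg, h, map_zero]))

/-- If `D` is annihilated by a squarefree polynomial and `D (D y) = 0`, then `D y = 0`. -/
private lemma aux_sq {F A : Type*} [Field F] [AddCommGroup A] [Module F A]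
    (D : Module.End F A) (y : A) (μ : Polynomial F) (hμ : Squarefree μ)
    (h0 : Polynomial.aeval D μ = 0) (hDD : D (D y) = 0) : D y = 0 := by
  set r := μ %ₘ (X ^ 2 : F[X]) with hrdef
  have hmonic : (X ^ 2 : F[X]).Monic := Polynomial.monic_X_pow 2
  have hdecomp : r + X ^ 2 * (μ /ₘ X ^ 2) = μ := Polynomial.modByMonic_add_div μ (X ^ 2)
  have hdegr : r.degree ≤ 1 := by
    have h2 := Polynomial.degree_modByMonic_lt μ hmonic
    rw [Polynomial.degree_X_pow] at h2
    exact Order.le_of_lt_succ (by exact_mod_cast h2)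
  have hr_eq : r = Polynomial.C (r.coeff 1) * X + Polynomial.C (r.coeff 0) :=
    Polynomial.eq_X_add_C_of_degree_le_one hdegr
  have hD2y : (D ^ 2) y = 0 := by rw [pow_two, Module.End.mul_apply]; exact hDD
  have happ : (Polynomial.aeval D μ) y = r.coeff 1 • D y + r.coeff 0 • y := by
    rw [← hdecomp, map_add, LinearMap.add_apply]
    have h1 : (Polynomial.aeval D (X ^ 2 * (μ /ₘ X ^ 2))) y = 0 := by
      rw [mul_comm, _root_.map_mul, Polynomial.aeval_X_pow, Module.End.mul_apply, hD2y, map_zero]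
    rw [h1, add_zero, hr_eq]
    simp [Module.algebraMap_end_apply, Module.End.mul_apply]
  rw [h0, LinearMap.zero_apply] at happ
  have happD := congrArg D happ
  rw [map_zero, map_add, _root_.map_smul, _root_.map_smul, hDD, smul_zero, zero_add] at happD
  by_cases ha0 : r.coeff 0 = 0
  · have h1 : r.coeff 1 • D y = 0 := by
      have := happ.symm
      rwa [ha0, zero_smul, add_zero] at this
    by_cases ha1 : r.coeff 1 = 0
    · exfalso
      have hr0 : r = 0 := by rw [hr_eq, ha0, ha1]; simp
      have h2 := hdecomp.symm
      rw [hr0, zero_add] at h2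
      have : X * X ∣ μ := ⟨μ /ₘ X ^ 2, by linear_combination h2⟩
      exact Polynomial.not_isUnit_X (hμ X this)
    · exact (smul_eq_zero.mp h1).resolve_left ha1
  · exact (smul_eq_zero.mp happD.symm).resolve_left ha0

private lemma aeval_mulLeft_aux {F A : Type*} [Field F] [Ring A] [Algebra F A] (x : A)
    (p : Polynomial F) :
    Polynomial.aeval (LinearMap.mulLeft F x) p = LinearMap.mulLeft F (Polynomial.aeval x p) := by
  induction p using Polynomial.induction_on' with
  | add p q hp hq =>
    rw [map_add, map_add, hp, hq]
    ext a
    simp [add_mul]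
  | monomial n c =>
    have hpow : (LinearMap.mulLeft F x) ^ n = LinearMap.mulLeft F (x ^ n) := by
      induction n with
      | zero => ext a; simp
      | succ k ih =>
        rw [pow_succ, ih]
        ext a
        simp [pow_succ, mul_assoc]
    rw [Polynomial.aeval_monomial, Polynomial.aeval_monomial, hpow]
    ext a
    simp [Module.algebraMap_end_apply, Module.End.mul_apply, Algebra.smul_def, mul_assoc]

private lemma aeval_mulRight_aux {F A : Type*} [Field F] [Ring A] [Algebra F A] (x : A)
    (p : Polynomial F) :
    Polynomial.aeval (LinearMap.mulRight F x) p = LinearMap.mulRight F (Polynomial.aeval x p) := by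
  induction p using Polynomial.induction_on' with
  | add p q hp hq =>
    rw [map_add, map_add, hp, hq]
    ext a
    simp [mul_add]
  | monomial n c =>
    have hpow : (LinearMap.mulRight F x) ^ n = LinearMap.mulRight F (x ^ n) := by
      induction n with
      | zero => ext a; simp
      | succ k ih =>
        rw [pow_succ, ih]
        ext a
        simp [pow_succ, pow_mul_comm', mul_assoc]
    rw [Polynomial.aeval_monomial, Polynomial.aeval_monomial, hpow]
    ext a
    simp only [Module.End.mul_apply, LinearMap.mulRight_apply, Module.algebraMap_end_apply,
      ← Algebra.smul_def, mul_smul_comm, LinearMap.smul_apply]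



/-- Let `F` be a field of characteristic 0, `K` a quadratic étale `F`-algebra with
nontrivial `F`-algebra involution `σ` (extended entrywise to `M₃(K)`), and
`J = {x ∈ M₃(K) : ᵗx̄ = x}` with Jordan product `x∘y = (xy+yx)/2`.  Let `E` be a cubic
étale `F`-algebra and `i : E → J` an injective `F`-linear map with `i 1 = 1` and
`i(zz') = i(z)∘i(z')`.  Then the matrices in `i(E)` pairwise commute and
`i(zz') = i(z)·i(z')` for the associative matrix product. -/
theorem stmt_13 {F K : Type*} [Field F] [CharZero F] [CommRing K] [Algebra F K]
    [IsReduced K] (hK : Module.finrank F K = 2)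
    (σ : K ≃ₐ[F] K) (hσ_ne : σ ≠ AlgEquiv.refl) (hσ_inv : ∀ k, σ (σ k) = k)
    {E : Type*} [CommRing E] [Algebra F E] [IsReduced E]
    (hE : Module.finrank F E = 3)
    (i : E →ₗ[F] Matrix (Fin 3) (Fin 3) K) (hinj : Function.Injective i)
    (hherm : ∀ z : E, ((i z).map σ)ᵀ = i z)
    (hone : i 1 = 1)
    (hjordan : ∀ z z' : E, i (z * z') = (2 : F)⁻¹ • (i z * i z' + i z' * i z)) :
    ∀ z z' : E, i z * i z' = i z' * i z ∧ i (z * z') = i z * i z' := by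
  haveI hKfin : Module.Finite F K := Module.finite_of_finrank_eq_succ hK
  haveI hEfin : Module.Finite F E := Module.finite_of_finrank_eq_succ hE
  haveI hAfin : Module.Finite F (Matrix (Fin 3) (Fin 3) K) := by infer_instance
  have h2ne : (2 : F) ≠ 0 := two_ne_zero
  have half : ∀ M : Matrix (Fin 3) (Fin 3) K, (2 : F)⁻¹ • (M + M) = M := by
    intro M
    rw [← two_smul F M, smul_smul, inv_mul_cancel₀ h2ne, one_smul]
  have hj2 : ∀ a b : E, (2 : F) • i (a * b) = i a * i b + i b * i a := by
    intro a b
    rw [hjordan a b, smul_smul, mul_inv_cancel₀ h2ne, one_smul]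
  -- i sends powers to powers
  have hpow : ∀ (w : E) (n : ℕ), i (w ^ n) = (i w) ^ n := by
    intro w n
    induction n with
    | zero => simpa using hone
    | succ k ih =>
      rw [pow_succ, hjordan (w ^ k) w, ih, ← pow_succ, ← pow_succ', half]
  -- i commutes with aeval
  have haev : ∀ (w : E) (p : Polynomial F),
      i (Polynomial.aeval w p) = Polynomial.aeval (i w) p := by
    intro w p
    induction p using Polynomial.induction_on' with
    | add p q hp hq => rw [map_add, map_add, map_add, hp, hq]
    | monomial n c =>
      rw [Polynomial.aeval_monomial, Polynomial.aeval_monomial, ← Algebra.smul_def,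
        ← Algebra.smul_def, LinearMap.map_smul, hpow]
  intro z z'
  have hzz : i (z * z) = i z * i z := by
    have := hpow z 2
    rw [pow_two, pow_two] at this
    exact this
  -- step A: the doubled Jordan identity applied to associativity
  have E1 : (2 : F) • ((2 : F) • i (z * (z * z')))
      = i z * (i z * i z' + i z' * i z) + (i z * i z' + i z' * i z) * i z := by
    rw [hj2 z (z * z'), smul_add, ← mul_smul_comm, ← smul_mul_assoc, hj2 z z']
  have E2 : (2 : F) • ((2 : F) • i (z * (z * z')))
      = (i z * i z * i z' + i z' * (i z * i z))
        + (i z * i z * i z' + i z' * (i z * i z)) := by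
    rw [show z * (z * z') = z * z * z' from (mul_assoc z z z').symm, hj2 (z * z) z', hzz,
      two_smul]
  have e5 := E1.symm.trans E2
  -- the commutator endomorphism
  have hDy : (LinearMap.mulLeft F (i z) - LinearMap.mulRight F (i z)) (i z')
      = i z * i z' - i z' * i z := by
    simp
  have hDD : (LinearMap.mulLeft F (i z) - LinearMap.mulRight F (i z))
      ((LinearMap.mulLeft F (i z) - LinearMap.mulRight F (i z)) (i z')) = 0 := by
    rw [hDy]
    simp only [LinearMap.sub_apply, LinearMap.mulLeft_apply, LinearMap.mulRight_apply]
    calc i z * (i z * i z' - i z' * i z) - (i z * i z' - i z' * i z) * i z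
        = ((i z * i z * i z' + i z' * (i z * i z))
            + (i z * i z * i z' + i z' * (i z * i z)))
          - (i z * (i z * i z' + i z' * i z) + (i z * i z' + i z' * i z) * i z) := by
          noncomm_ring
      _ = 0 := by rw [← e5, sub_self]
  -- semisimplicity of the commutator endomorphism
  have hq : Squarefree (minpoly F z) := sqfree_minpoly_aux z
  have hxann : Polynomial.aeval (i z) (minpoly F z) = 0 := by
    rw [← haev z, minpoly.aeval, map_zero]
  have hLann : Polynomial.aeval (LinearMap.mulLeft F (i z)) (minpoly F z) = 0 := by
    rw [aeval_mulLeft_aux, hxann]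
    ext a
    simp
  have hRann : Polynomial.aeval (LinearMap.mulRight F (i z)) (minpoly F z) = 0 := by
    rw [aeval_mulRight_aux, hxann]
    ext a
    simp
  have hLs : Module.End.IsSemisimple (LinearMap.mulLeft F (i z)) :=
    Module.End.isSemisimple_of_squarefree_aeval_eq_zero hq hLann
  have hRs : Module.End.IsSemisimple (LinearMap.mulRight F (i z)) :=
    Module.End.isSemisimple_of_squarefree_aeval_eq_zero hq hRann
  have hCom : Commute (LinearMap.mulLeft F (i z)) (LinearMap.mulRight F (i z)) := by
    ext a
    simp [Module.End.mul_apply, mul_assoc]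
  have hDs : Module.End.IsSemisimple
      (LinearMap.mulLeft F (i z) - LinearMap.mulRight F (i z)) :=
    Module.End.IsSemisimple.sub_of_commute hCom hLs hRs
  have hμ : Squarefree (minpoly F (LinearMap.mulLeft F (i z) - LinearMap.mulRight F (i z))) :=
    Module.End.IsSemisimple.minpoly_squarefree hDs
  have hμ0 : Polynomial.aeval (LinearMap.mulLeft F (i z) - LinearMap.mulRight F (i z))
      (minpoly F (LinearMap.mulLeft F (i z) - LinearMap.mulRight F (i z))) = 0 :=
    minpoly.aeval _ _
  have hcomm0 := aux_sq _ (i z') _ hμ hμ0 hDD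
  rw [hDy] at hcomm0
  have hc : i z * i z' = i z' * i z := sub_eq_zero.mp hcomm0
  refine ⟨hc, ?_⟩
  rw [hjordan z z', ← hc, half]
end
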